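/- Fix c₀ ≠ 0 and let 𝔥 ∈ C¹([−1, 1]) with 𝔥(0) > 0 and 𝔥'(0) = 0 (e.g. 𝔥 even). Consider the vector field Φ of the helicoidal ODE system with ε = 1 and its equilibrium e₀ = (1/(2𝔥(0)), 0). Then Φ is differentiable at e₀ and its derivative at e₀ is the linear map of ℝ² with matrix [[0, 1], [−4𝔥(0)²/(1 + 4c₀²𝔥(0)²), 0]]; in particular this matrix has trace 0 and determinant 4𝔥(0)²/(1 + 4c₀²𝔥(0)²) > 0, so its eigenvalues are the purely imaginary numbers ±(2𝔥(0)/√(1 + 4c₀²𝔥(0)²))·i. -/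

import Mathlib

/-!
At `e₀` the numerator `N` of the second component of `Φ` vanishes, so `Φ₂ = N / D` has derivative
`N'(e₀) / D(e₀)` there. At `y = 0` the `y`-dependence of `N` enters only through `y²`, `√(1 - y²)` or
`𝔥(xy/…)` with `𝔥'(0) = 0`, so only the `x`-derivative survives:
`N'(e₀) = (2x₀ - 6𝔥(0)x₀²) dx = -x₀ dx` with `x₀ = 1/(2𝔥(0))`, and `D(e₀) = x₀(x₀² + c₀²)`.
The linearization is therefore `(p.2, -p.1 / (x₀² + c₀²))`; its characteristic polynomial is
`X² + k` with `k = ω²`.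
-/

/-- The vector field of the helicoidal prescribed mean curvature ODE system
`(x, y)' = Φ(x, y)`. -/
noncomputable def helicoidalField (c₀ ε : ℝ) (𝔥 : ℝ → ℝ) (p : ℝ × ℝ) : ℝ × ℝ :=
  (p.2,
    ((1 - p.2 ^ 2) * (p.1 ^ 2 + 2 * c₀ ^ 2 * p.2 ^ 2)
        - 2 * ε * 𝔥 (p.1 * p.2 / Real.sqrt (c₀ ^ 2 * p.2 ^ 2 + p.1 ^ 2))
          * Real.sqrt (1 - p.2 ^ 2) * (c₀ ^ 2 * p.2 ^ 2 + p.1 ^ 2) ^ ((3 : ℝ) / 2))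
      / (p.1 ^ 3 + c₀ ^ 2 * p.1))

open ContinuousLinearMap

section
variable {E : Type*} [NormedAddCommGroup E] [NormedSpace ℝ E]

theorem HasFDerivAt.div_of_apply_eq_zero {f g : E → ℝ} {f' : E →L[ℝ] ℝ} {x : E}
    (hf : HasFDerivAt f f' x) (hg : DifferentiableAt ℝ g x) (hgx : g x ≠ 0) (hfx : f x = 0) :
    HasFDerivAt (fun y => f y / g y) ((g x)⁻¹ • f') x := by
  simpa only [hfx, zero_smul, zero_add, div_eq_mul_inv] using
    hf.fun_mul (hg.fun_inv hgx).hasFDerivAt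

theorem hasFDerivAt_snd_sq (x : E) :
    HasFDerivAt (fun p : E × ℝ => p.2 ^ 2) (0 : E × ℝ →L[ℝ] ℝ) (x, 0) := by
  simpa using (hasFDerivAt_snd (p := (x, (0 : ℝ))) (𝕜 := ℝ)).pow 2

end

theorem Real.sq_rpow_three_halves {x : ℝ} (hx : 0 ≤ x) : (x ^ 2) ^ ((3 : ℝ) / 2) = x ^ 3 := by
  rw [← Real.rpow_natCast_mul hx]
  norm_num

noncomputable def helicoidalNumerator (c₀ ε : ℝ) (𝔥 : ℝ → ℝ) (p : ℝ × ℝ) : ℝ :=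
  (1 - p.2 ^ 2) * (p.1 ^ 2 + 2 * c₀ ^ 2 * p.2 ^ 2)
    - 2 * ε * 𝔥 (p.1 * p.2 / Real.sqrt (c₀ ^ 2 * p.2 ^ 2 + p.1 ^ 2))
      * Real.sqrt (1 - p.2 ^ 2) * (c₀ ^ 2 * p.2 ^ 2 + p.1 ^ 2) ^ ((3 : ℝ) / 2)

theorem helicoidalNumerator_apply_snd_zero (c₀ ε : ℝ) (𝔥 : ℝ → ℝ) {x : ℝ} (hx : 0 ≤ x) :
    helicoidalNumerator c₀ ε 𝔥 (x, 0) = x ^ 2 * (1 - 2 * ε * 𝔥 0 * x) := by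
  simp [helicoidalNumerator, Real.sq_rpow_three_halves hx]
  ring

theorem hasFDerivAt_helicoidalNumerator (c₀ ε : ℝ) {𝔥 : ℝ → ℝ} (h𝔥 : HasDerivAt 𝔥 0 0)
    {x : ℝ} (hx : 0 < x) :
    HasFDerivAt (helicoidalNumerator c₀ ε 𝔥)
      ((2 * x - 6 * ε * 𝔥 0 * x ^ 2) • fst ℝ ℝ ℝ) (x, 0) := by
  have hy := hasFDerivAt_snd_sq x
  have hx2 : HasFDerivAt (fun p : ℝ × ℝ => p.1 ^ 2) ((2 * x) • fst ℝ ℝ ℝ) (x, 0) := by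
    simpa using (hasFDerivAt_fst (p := (x, (0 : ℝ))) (𝕜 := ℝ)).pow 2
  have hw : HasFDerivAt (fun p : ℝ × ℝ => c₀ ^ 2 * p.2 ^ 2 + p.1 ^ 2)
      ((2 * x) • fst ℝ ℝ ℝ) (x, 0) := by
    simpa using (hy.const_mul (c₀ ^ 2)).fun_add hx2
  have hu : DifferentiableAt ℝ
      (fun p : ℝ × ℝ => p.1 * p.2 / Real.sqrt (c₀ ^ 2 * p.2 ^ 2 + p.1 ^ 2)) (x, 0) := by
    fun_prop (disch := simp [hx.ne', Real.sqrt_eq_zero'] <;> positivity)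
  have hG : HasFDerivAt
      (fun p : ℝ × ℝ => 𝔥 (p.1 * p.2 / Real.sqrt (c₀ ^ 2 * p.2 ^ 2 + p.1 ^ 2)))
      (0 : ℝ × ℝ →L[ℝ] ℝ) (x, 0) := by
    simpa [Function.comp_def] using h𝔥.comp_hasFDerivAt_of_eq (x, 0) hu.hasFDerivAt (by simp)
  have hQ : HasFDerivAt (fun p : ℝ × ℝ => Real.sqrt (1 - p.2 ^ 2)) (0 : ℝ × ℝ →L[ℝ] ℝ) (x, 0) := by
    simpa using ((hasFDerivAt_const (1 : ℝ) (x, (0 : ℝ))).fun_sub hy).sqrt (by simp)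
  have hR : HasFDerivAt (fun p : ℝ × ℝ => (c₀ ^ 2 * p.2 ^ 2 + p.1 ^ 2) ^ ((3 : ℝ) / 2))
      ((3 * x ^ 2) • fst ℝ ℝ ℝ) (x, 0) := by
    refine (hw.rpow_const (Or.inr (by norm_num))).congr_fderiv <| ext fun p => ?_
    have hsqrt : (x ^ 2) ^ ((3 : ℝ) / 2 - 1) = x := by
      rw [show (3 : ℝ) / 2 - 1 = 1 / 2 by norm_num, ← Real.sqrt_eq_rpow, Real.sqrt_sq hx.le]
    simp [hsqrt]
    ring
  have hA : HasFDerivAt (fun p : ℝ × ℝ => (1 - p.2 ^ 2) * (p.1 ^ 2 + 2 * c₀ ^ 2 * p.2 ^ 2))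
      ((2 * x) • fst ℝ ℝ ℝ) (x, 0) := by
    simpa using ((hasFDerivAt_const (1 : ℝ) (x, (0 : ℝ))).fun_sub hy).fun_mul
      (hx2.fun_add (hy.const_mul (2 * c₀ ^ 2)))
  refine (hA.fun_sub (((hG.const_mul (2 * ε)).fun_mul hQ).fun_mul hR)).congr_fderiv <|
    ext fun p => ?_
  simp
  ring

theorem hasFDerivAt_helicoidalField_equilibrium (c₀ : ℝ) {𝔥 : ℝ → ℝ} (h0 : 0 < 𝔥 0)
    (h𝔥 : HasDerivAt 𝔥 0 0) :
    HasFDerivAt (helicoidalField c₀ 1 𝔥)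
      ((snd ℝ ℝ ℝ).prod ((-(4 * 𝔥 0 ^ 2 / (1 + 4 * c₀ ^ 2 * 𝔥 0 ^ 2))) • fst ℝ ℝ ℝ))
      (1 / (2 * 𝔥 0), 0) := by
  set x₀ := 1 / (2 * 𝔥 0) with hx₀
  have hx₀_pos : 0 < x₀ := by positivity
  have hN0 : helicoidalNumerator c₀ 1 𝔥 (x₀, 0) = 0 := by
    rw [helicoidalNumerator_apply_snd_zero c₀ 1 𝔥 hx₀_pos.le, hx₀]
    field_simp
    ring
  have hD : DifferentiableAt ℝ (fun p : ℝ × ℝ => p.1 ^ 3 + c₀ ^ 2 * p.1) (x₀, 0) := by fun_prop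
  have hD0 : x₀ ^ 3 + c₀ ^ 2 * x₀ ≠ 0 := by positivity
  refine (hasFDerivAt_snd.prodMk ((hasFDerivAt_helicoidalNumerator c₀ 1 h𝔥 hx₀_pos)
    |>.div_of_apply_eq_zero hD hD0 hN0)).congr_fderiv <| ext fun p => Prod.ext rfl ?_
  simp only [prod_apply, FunLike.coe_smul, coe_fst', Pi.smul_apply, smul_eq_mul, hx₀]
  field_simp
  ring

theorem eval_charpoly_eq_zero_iff {k ω : ℝ} (hω : ω ^ 2 = k) (μ : ℂ) :
    Polynomial.eval μ (Matrix.charpoly ((!![(0 : ℝ), 1; -k, 0]).map Complex.ofReal)) = 0 ↔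
      μ = ω * Complex.I ∨ μ = -(ω * Complex.I) := by
  have hk : ((k : ℝ) : ℂ) = -(ω * Complex.I) ^ 2 := by
    rw [← hω, mul_pow, Complex.I_sq]
    push_cast
    ring
  rw [← sq_eq_sq_iff_eq_or_eq_neg, Matrix.charpoly_fin_two]
  simp [Matrix.trace_fin_two, Matrix.det_fin_two, hk, add_neg_eq_zero]

theorem helicoidal_linearization_center_general (c₀ : ℝ) (𝔥 : ℝ → ℝ)
    (hC1 : ContDiffOn ℝ 1 𝔥 (Set.Icc (-1) 1))
    (h0 : 0 < 𝔥 0) (hd0 : deriv 𝔥 0 = 0) :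
    let e₀ : ℝ × ℝ := (1 / (2 * 𝔥 0), 0)
    let k : ℝ := 4 * (𝔥 0) ^ 2 / (1 + 4 * c₀ ^ 2 * (𝔥 0) ^ 2)
    let ω : ℝ := 2 * 𝔥 0 / Real.sqrt (1 + 4 * c₀ ^ 2 * (𝔥 0) ^ 2)
    DifferentiableAt ℝ (helicoidalField c₀ 1 𝔥) e₀ ∧
    (∀ p : ℝ × ℝ, fderiv ℝ (helicoidalField c₀ 1 𝔥) e₀ p = (p.2, -k * p.1)) ∧
    Matrix.trace !![(0 : ℝ), 1; -k, 0] = 0 ∧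
    Matrix.det !![(0 : ℝ), 1; -k, 0] = k ∧
    0 < k ∧
    (∀ μ : ℂ,
      Polynomial.eval μ
          (Matrix.charpoly ((!![(0 : ℝ), 1; -k, 0]).map Complex.ofReal)) = 0
        ↔ (μ = (ω : ℂ) * Complex.I ∨ μ = -((ω : ℂ) * Complex.I))) := by
  intro e₀ k ω
  have h𝔥 : HasDerivAt 𝔥 0 0 := by
    have hdiff : DifferentiableAt ℝ 𝔥 0 := (hC1.differentiableOn one_ne_zero 0 (by norm_num))
      |>.differentiableAt (Icc_mem_nhds (by norm_num) (by norm_num))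
    exact hdiff.hasDerivAt.congr_deriv hd0
  have H := hasFDerivAt_helicoidalField_equilibrium c₀ h0 h𝔥
  have hωk : ω ^ 2 = k := by
    rw [div_pow, Real.sq_sqrt (by positivity)]
    ring
  refine ⟨H.differentiableAt, fun p => ?_, by simp [Matrix.trace_fin_two],
    by simp [Matrix.det_fin_two], by positivity, eval_charpoly_eq_zero_iff hωk⟩
  rw [H.fderiv]
  simp [k]

/-- The linearization of the helicoidal system (`ε = 1`) at the
equilibrium `e₀ = (1/(2𝔥(0)), 0)` is the linear map with matrix
`[[0, 1], [−4𝔥(0)²/(1 + 4c₀²𝔥(0)²), 0]]`, which has trace `0`, determinant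
`4𝔥(0)²/(1 + 4c₀²𝔥(0)²) > 0`, and purely imaginary eigenvalues
`±(2𝔥(0)/√(1 + 4c₀²𝔥(0)²))·i`. -/
theorem helicoidal_linearization_center (c₀ : ℝ) (hc₀ : c₀ ≠ 0) (𝔥 : ℝ → ℝ)
    (hC1 : ContDiffOn ℝ 1 𝔥 (Set.Icc (-1) 1))
    (h0 : 0 < 𝔥 0) (hd0 : deriv 𝔥 0 = 0) :
    let e₀ : ℝ × ℝ := (1 / (2 * 𝔥 0), 0)
    let k : ℝ := 4 * (𝔥 0) ^ 2 / (1 + 4 * c₀ ^ 2 * (𝔥 0) ^ 2)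
    let ω : ℝ := 2 * 𝔥 0 / Real.sqrt (1 + 4 * c₀ ^ 2 * (𝔥 0) ^ 2)
    DifferentiableAt ℝ (helicoidalField c₀ 1 𝔥) e₀ ∧
    (∀ p : ℝ × ℝ, fderiv ℝ (helicoidalField c₀ 1 𝔥) e₀ p = (p.2, -k * p.1)) ∧
    Matrix.trace !![(0 : ℝ), 1; -k, 0] = 0 ∧
    Matrix.det !![(0 : ℝ), 1; -k, 0] = k ∧
    0 < k ∧
    (∀ μ : ℂ,
      Polynomial.eval μ
          (Matrix.charpoly ((!![(0 : ℝ), 1; -k, 0]).map Complex.ofReal)) = 0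
        ↔ (μ = (ω : ℂ) * Complex.I ∨ μ = -((ω : ℂ) * Complex.I))) :=
  helicoidal_linearization_center_general c₀ 𝔥 hC1 h0 hd0
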